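/- Let d ∈ ℕ and z > 0 be real. Then ∫_{ℝ^d} G^d_z(x)² dx < ∞ if and only if d ∈ {1, 2, 3}. -/

import Mathlib

open MeasureTheory

/-- The Green's function `G^d_z` of `-Δ + z` on `ℝ^d`, for real `z > 0`. -/
noncomputable def greenR (d : ℕ) (z : ℝ) (x : EuclideanSpace ℝ (Fin d)) : ℝ :=
  ∫ t in Set.Ioi (0 : ℝ),
    (4 * Real.pi * t) ^ (-(d : ℝ) / 2) * Real.exp (-(‖x‖ ^ 2 / (4 * t)) - z * t)

namespace GreenAux

open Real Set ENNReal

/-- The heat-kernel integrand. -/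
noncomputable def g (d : ℕ) (z : ℝ) (x : EuclideanSpace ℝ (Fin d)) (t : ℝ) : ℝ :=
  (4 * Real.pi * t) ^ (-(d : ℝ) / 2) * Real.exp (-(‖x‖ ^ 2 / (4 * t)) - z * t)

lemma g_nonneg {d : ℕ} {z : ℝ} {x : EuclideanSpace ℝ (Fin d)} {t : ℝ} (ht : 0 < t) :
    0 ≤ g d z x t := by
  have h4 : (0:ℝ) ≤ 4 * Real.pi * t := by positivity
  exact mul_nonneg (Real.rpow_nonneg h4 _) (Real.exp_nonneg _)

lemma measurable_g (d : ℕ) (z : ℝ) :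
    Measurable fun p : EuclideanSpace ℝ (Fin d) × ℝ => g d z p.1 p.2 := by
  unfold g
  fun_prop

/-- Integrability of the heat-kernel integrand for `x ≠ 0`. -/
lemma integrableOn_g (d : ℕ) {z : ℝ} (hz : 0 < z) {x : EuclideanSpace ℝ (Fin d)}
    (hx : x ≠ 0) : IntegrableOn (g d z x) (Ioi (0:ℝ)) := by
  have hxn : 0 < ‖x‖ := norm_pos_iff.2 hx
  set c : ℝ := ‖x‖ ^ 2 / 4 with hcdef
  have hc : 0 < c := by positivity
  -- the majorant
  have hmaj : IntegrableOn
      (fun t : ℝ => ((4 * Real.pi) ^ (-(d:ℝ)/2) * ((d.factorial : ℝ) / c ^ d)) *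
        (t ^ ((d:ℝ)/2) * Real.exp (-z * t))) (Ioi (0:ℝ)) := by
    refine Integrable.const_mul ?_ _
    have h0 := integrableOn_rpow_mul_exp_neg_mul_rpow
      (show (-1:ℝ) < (d:ℝ)/2 by have : (0:ℝ) ≤ (d:ℝ) := Nat.cast_nonneg d; linarith) (zero_lt_one : (0:ℝ) < 1) hz
    refine h0.congr_fun (fun t ht => ?_) measurableSet_Ioi
    dsimp only; rw [Real.rpow_one]
  have hmeas : AEStronglyMeasurable (g d z x) (volume.restrict (Ioi (0:ℝ))) := by
    have : Measurable (g d z x) :=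
      (measurable_g d z).comp (measurable_const.prodMk measurable_id)
    exact this.aestronglyMeasurable
  refine hmaj.mono' hmeas ?_
  refine (ae_restrict_iff' measurableSet_Ioi).2 (ae_of_all _ fun t ht => ?_)
  rw [Real.norm_of_nonneg (g_nonneg ht)]
  have ht0 : (0:ℝ) < t := ht
  -- rewrite g
  have hg : g d z x t
      = (4 * Real.pi) ^ (-(d:ℝ)/2) * (t ^ (-(d:ℝ)/2) * (Real.exp (-(c/t)) * Real.exp (-z * t))) := by
    unfold g
    rw [← Real.exp_add, Real.mul_rpow (by positivity) ht0.le]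
    rw [show -(c/t) + -z * t = -(‖x‖ ^ 2 / (4 * t)) - z * t by
      rw [hcdef]; field_simp; ring]
    ring
  rw [hg]
  have hexp : Real.exp (-(c/t)) ≤ (d.factorial : ℝ) * t ^ d / c ^ d := by
    have h1 : (c/t) ^ d / (d.factorial : ℝ) ≤ Real.exp (c/t) :=
      Real.pow_div_factorial_le_exp (x := c/t) (le_of_lt (div_pos hc ht0)) d
    have hfac : (0:ℝ) < (d.factorial : ℝ) := by exact_mod_cast d.factorial_pos
    rw [Real.exp_neg, inv_le_comm₀ (Real.exp_pos _) (by positivity)]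
    refine le_trans (le_of_eq ?_) h1
    rw [div_pow, hcdef]
    field_simp
    rw [← mul_pow, ← mul_pow]; congr 1; field_simp
  have hpow : t ^ (-(d:ℝ)/2) * t ^ d = t ^ ((d:ℝ)/2) := by
    rw [← Real.rpow_natCast t d, ← Real.rpow_add ht0]
    congr 1
    ring
  calc (4 * Real.pi) ^ (-(d:ℝ)/2) * (t ^ (-(d:ℝ)/2) * (Real.exp (-(c/t)) * Real.exp (-z * t)))
      ≤ (4 * Real.pi) ^ (-(d:ℝ)/2) *
          (t ^ (-(d:ℝ)/2) * (((d.factorial : ℝ) * t ^ d / c ^ d) * Real.exp (-z * t))) := by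
        have h4 : (0:ℝ) ≤ (4 * Real.pi) ^ (-(d:ℝ)/2) := Real.rpow_nonneg (by positivity) _
        refine mul_le_mul_of_nonneg_left ?_ h4
        refine mul_le_mul_of_nonneg_left ?_ (Real.rpow_nonneg ht0.le _)
        exact mul_le_mul_of_nonneg_right hexp (Real.exp_nonneg _)
    _ = ((4 * Real.pi) ^ (-(d:ℝ)/2) * ((d.factorial : ℝ) / c ^ d)) *
          (t ^ ((d:ℝ)/2) * Real.exp (-z * t)) := by
        rw [← hpow]; ring

/-- the function `h` appearing after the Gaussian integration. -/
noncomputable def h (d : ℕ) (z : ℝ) (u : ℝ) : ℝ≥0∞ :=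
  ENNReal.ofReal ((4 * Real.pi * u) ^ (-(d : ℝ) / 2) * Real.exp (-(z * u)))

lemma measurable_h (d : ℕ) (z : ℝ) : Measurable (h d z) := by
  unfold h
  fun_prop

/-- The Gaussian integration step. -/
lemma gauss_step (d : ℕ) {z t s : ℝ} (hz : 0 < z) (ht : 0 < t) (hs : 0 < s) :
    ∫⁻ x : EuclideanSpace ℝ (Fin d),
        ENNReal.ofReal (g d z x t) * ENNReal.ofReal (g d z x s) = h d z (t + s) := by
  have hts : 0 < t + s := by linarith
  set b : ℝ := 1/(4*t) + 1/(4*s) with hbdef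
  have hb : 0 < b := by positivity
  set C : ℝ := (4*Real.pi*t) ^ (-(d:ℝ)/2) * (4*Real.pi*s) ^ (-(d:ℝ)/2) * Real.exp (-(z*(t+s)))
    with hCdef
  have hCt : (0:ℝ) ≤ (4*Real.pi*t) ^ (-(d:ℝ)/2) := Real.rpow_nonneg (by positivity) _
  have hCs : (0:ℝ) ≤ (4*Real.pi*s) ^ (-(d:ℝ)/2) := Real.rpow_nonneg (by positivity) _
  have hC : 0 ≤ C := by rw [hCdef]; positivity
  have hpt : ∀ x : EuclideanSpace ℝ (Fin d),
      ENNReal.ofReal (g d z x t) * ENNReal.ofReal (g d z x s)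
        = ENNReal.ofReal (C * Real.exp (-b * ‖x‖^2)) := by
    intro x
    rw [← ENNReal.ofReal_mul (g_nonneg ht)]
    congr 1
    unfold g
    have hexp : Real.exp (-(‖x‖^2/(4*t)) - z*t) * Real.exp (-(‖x‖^2/(4*s)) - z*s)
        = Real.exp (-(z*(t+s))) * Real.exp (-b*‖x‖^2) := by
      rw [← Real.exp_add, ← Real.exp_add]
      congr 1
      rw [hbdef]
      field_simp
      ring
    rw [mul_mul_mul_comm, hexp, hCdef]
    ring
  have hint : Integrable (fun x : EuclideanSpace ℝ (Fin d) => Real.exp (-b*‖x‖^2)) := by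
    have h2 := (GaussianFourier.integrable_cexp_neg_mul_sq_norm_add
      (b := (b:ℂ)) (by simpa using hb) 0 (0 : EuclideanSpace ℝ (Fin d))).norm
    refine h2.congr (ae_of_all _ fun v => ?_)
    simp [Complex.norm_exp]
    exact Or.inl (by rw [← Complex.ofReal_pow, Complex.ofReal_re])
  calc ∫⁻ x : EuclideanSpace ℝ (Fin d),
        ENNReal.ofReal (g d z x t) * ENNReal.ofReal (g d z x s)
      = ∫⁻ x : EuclideanSpace ℝ (Fin d), ENNReal.ofReal (C * Real.exp (-b*‖x‖^2)) :=
        lintegral_congr hpt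
    _ = ENNReal.ofReal C * ∫⁻ x : EuclideanSpace ℝ (Fin d), ENNReal.ofReal (Real.exp (-b*‖x‖^2)) := by
        simp_rw [ENNReal.ofReal_mul hC]
        rw [lintegral_const_mul' _ _ ENNReal.ofReal_ne_top]
    _ = ENNReal.ofReal C * ENNReal.ofReal ((Real.pi/b) ^ ((d:ℝ)/2)) := by
        rw [← ofReal_integral_eq_lintegral_ofReal hint (ae_of_all _ fun x => Real.exp_nonneg _),
          GaussianFourier.integral_rexp_neg_mul_sq_norm hb, finrank_euclideanSpace_fin]
    _ = h d z (t + s) := by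
        rw [← ENNReal.ofReal_mul hC]
        unfold h
        congr 1
        rw [hCdef]
        -- real identity
        have key : (4*Real.pi*t) ^ (-(d:ℝ)/2) * (4*Real.pi*s) ^ (-(d:ℝ)/2)
            * (Real.pi/b) ^ ((d:ℝ)/2) = (4*Real.pi*(t+s)) ^ (-(d:ℝ)/2) := by
          simp only [neg_div]
          rw [Real.rpow_neg (by positivity), Real.rpow_neg (by positivity),
            Real.rpow_neg (by positivity), ← Real.inv_rpow (by positivity),
            ← Real.inv_rpow (by positivity), ← Real.inv_rpow (by positivity),
            ← Real.mul_rpow (by positivity) (by positivity),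
            ← Real.mul_rpow (by positivity) (by positivity)]
          congr 1
          rw [hbdef]
          field_simp
          ring
        rw [← key]
        ring

/-- shift step -/
lemma shift_step (d : ℕ) (z : ℝ) (t : ℝ) :
    ∫⁻ s in Ioi (0:ℝ), h d z (t + s) = ∫⁻ u in Ioi t, h d z u := by
  have hpre : (fun s : ℝ => t + s) ⁻¹' (Ioi t) = Ioi 0 := by
    ext s; simp
  have := (measurePreserving_add_left (volume : Measure ℝ) t).setLIntegral_comp_preimage
    (s := Ioi t) measurableSet_Ioi (measurable_h d z)
  rw [← this, hpre]

/-- layer-cake / Tonelli step -/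
lemma layer_step (d : ℕ) (z : ℝ) :
    ∫⁻ t in Ioi (0:ℝ), ∫⁻ u in Ioi t, h d z u
      = ∫⁻ u in Ioi (0:ℝ), ENNReal.ofReal u * h d z u := by
  have hmeas : AEMeasurable (Function.uncurry fun t u : ℝ => (Ioi t).indicator (h d z) u)
      ((volume.restrict (Ioi (0:ℝ))).prod (volume.restrict (Ioi (0:ℝ)))) := by
    have : (Function.uncurry fun t u : ℝ => (Ioi t).indicator (h d z) u)
        = fun p : ℝ × ℝ => ({q : ℝ × ℝ | q.1 < q.2}).indicator (fun q => h d z q.2) p := by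
      ext p
      simp [Function.uncurry, Set.indicator_apply, Set.mem_Ioi]
    rw [this]
    exact (((measurable_h d z).comp measurable_snd).indicator
      (measurableSet_lt measurable_fst measurable_snd)).aemeasurable
  calc ∫⁻ t in Ioi (0:ℝ), ∫⁻ u in Ioi t, h d z u
      = ∫⁻ t in Ioi (0:ℝ), ∫⁻ u in Ioi (0:ℝ), (Ioi t).indicator (h d z) u := by
        refine setLIntegral_congr_fun measurableSet_Ioi (fun t ht => ?_)
        rw [lintegral_indicator measurableSet_Ioi,
          Measure.restrict_restrict measurableSet_Ioi, Ioi_inter_Ioi,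
          max_eq_left (le_of_lt ht)]
    _ = ∫⁻ u in Ioi (0:ℝ), ∫⁻ t in Ioi (0:ℝ), (Ioi t).indicator (h d z) u :=
        lintegral_lintegral_swap hmeas
    _ = ∫⁻ u in Ioi (0:ℝ), ENNReal.ofReal u * h d z u := by
        refine setLIntegral_congr_fun measurableSet_Ioi (fun u hu => ?_)
        have : ∀ t : ℝ, (Ioi t).indicator (h d z) u = (Iio u).indicator (fun _ => h d z u) t := by
          intro t
          simp [Set.indicator_apply, Set.mem_Ioi, Set.mem_Iio]
        simp_rw [this]
        rw [lintegral_indicator measurableSet_Iio, setLIntegral_const,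
          Measure.restrict_apply measurableSet_Iio, Iio_inter_Ioi, Real.volume_Ioo, sub_zero,
          mul_comm]

/-- divergence of the final integral for `d ≥ 4`. -/
lemma J_top (d : ℕ) (hd : 4 ≤ d) {z : ℝ} (hz : 0 < z) :
    ∫⁻ u in Ioi (0:ℝ),
      ENNReal.ofReal ((4 * Real.pi) ^ (-(d:ℝ)/2) * (u ^ (1-(d:ℝ)/2) * Real.exp (-(z*u)))) = ⊤ := by
  set c : ℝ := (4 * Real.pi) ^ (-(d:ℝ)/2) * Real.exp (-z) with hc
  have hc0 : 0 < c := by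
    apply mul_pos _ (Real.exp_pos _)
    exact Real.rpow_pos_of_pos (by positivity) _
  have hde : 1 - (d:ℝ)/2 ≤ -1 := by
    have : (4:ℝ) ≤ (d:ℝ) := by exact_mod_cast hd
    linarith
  -- the inner lintegral on Ioo 0 1 of c * u⁻¹ is infinite
  have h2 : ∫⁻ u in Ioo (0:ℝ) 1, ENNReal.ofReal (c * u⁻¹) = ⊤ := by
    by_contra h2
    have hmeas : AEStronglyMeasurable (fun u : ℝ => c * u⁻¹) (volume.restrict (Ioo (0:ℝ) 1)) :=
      (measurable_const.mul measurable_inv).aestronglyMeasurable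
    have hnn : 0 ≤ᵐ[volume.restrict (Ioo (0:ℝ) 1)] fun u : ℝ => c * u⁻¹ := by
      refine (ae_restrict_iff' measurableSet_Ioo).2 (ae_of_all _ fun u hu => ?_)
      have := hu.1
      positivity
    have hint : IntegrableOn (fun u : ℝ => c * u⁻¹) (Ioo (0:ℝ) 1) :=
      ⟨hmeas, (hasFiniteIntegral_iff_ofReal hnn).2 (lt_top_iff_ne_top.2 h2)⟩
    have hint2 : IntegrableOn (fun u : ℝ => u ^ (-1:ℝ)) (Ioo (0:ℝ) 1) := by
      have h3 : IntegrableOn (fun u : ℝ => c⁻¹ * (c * u⁻¹)) (Ioo (0:ℝ) 1) := hint.const_mul c⁻¹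
      refine h3.congr_fun (fun u hu => ?_) measurableSet_Ioo
      rw [Real.rpow_neg_one]
      field_simp
    rw [intervalIntegral.integrableOn_Ioo_rpow_iff one_pos] at hint2
    linarith
  have h1 : ∫⁻ u in Ioo (0:ℝ) 1, ENNReal.ofReal (c * u⁻¹)
      ≤ ∫⁻ u in Ioo (0:ℝ) 1,
          ENNReal.ofReal ((4 * Real.pi) ^ (-(d:ℝ)/2) * (u ^ (1-(d:ℝ)/2) * Real.exp (-(z*u)))) := by
    refine lintegral_mono_ae ((ae_restrict_iff' measurableSet_Ioo).2 (ae_of_all _ fun u hu => ?_))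
    refine ENNReal.ofReal_le_ofReal ?_
    rw [hc]
    have hr : u ^ (-1:ℝ) ≤ u ^ (1-(d:ℝ)/2) :=
      Real.rpow_le_rpow_of_exponent_ge hu.1 hu.2.le hde
    rw [← Real.rpow_neg_one u]
    have hexp : Real.exp (-z) ≤ Real.exp (-(z*u)) := by
      apply Real.exp_le_exp.2
      nlinarith [hu.1, hu.2]
    rw [mul_assoc]
    refine mul_le_mul_of_nonneg_left ?_ (Real.rpow_nonneg (by positivity) _)
    rw [mul_comm (Real.exp (-z))]
    exact mul_le_mul hr hexp (Real.exp_nonneg _) (Real.rpow_nonneg hu.1.le _)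
  have hsub : (∫⁻ u in Ioo (0:ℝ) 1,
      ENNReal.ofReal ((4 * Real.pi) ^ (-(d:ℝ)/2) * (u ^ (1-(d:ℝ)/2) * Real.exp (-(z*u)))))
      ≤ ∫⁻ u in Ioi (0:ℝ),
      ENNReal.ofReal ((4 * Real.pi) ^ (-(d:ℝ)/2) * (u ^ (1-(d:ℝ)/2) * Real.exp (-(z*u)))) :=
    lintegral_mono_set (fun u hu => hu.1)
  exact eq_top_iff.2 (h2 ▸ (h1.trans hsub))

/-- convergence of the final integral for `d ≤ 3`. -/
lemma J_fin (d : ℕ) (hd : (d:ℝ) < 4) {z : ℝ} (hz : 0 < z) :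
    ∫⁻ u in Ioi (0:ℝ),
      ENNReal.ofReal ((4 * Real.pi) ^ (-(d:ℝ)/2) * (u ^ (1-(d:ℝ)/2) * Real.exp (-(z*u)))) < ⊤ := by
  have hs : (-1:ℝ) < 1 - (d:ℝ)/2 := by linarith
  have hint : IntegrableOn
      (fun u : ℝ => (4 * Real.pi) ^ (-(d:ℝ)/2) * (u ^ (1-(d:ℝ)/2) * Real.exp (-(z*u))))
      (Ioi (0:ℝ)) := by
    refine Integrable.const_mul ?_ _
    have h0 := integrableOn_rpow_mul_exp_neg_mul_rpow hs (zero_lt_one : (0:ℝ) < 1) hz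
    refine h0.congr_fun (fun u hu => ?_) measurableSet_Ioi
    dsimp only; rw [Real.rpow_one, neg_mul]
  exact hint.setLIntegral_lt_top

/-- the main identity. -/
lemma main_eq (d : ℕ) (hd : 0 < d) {z : ℝ} (hz : 0 < z) :
    (∫⁻ x : EuclideanSpace ℝ (Fin d), ENNReal.ofReal ((greenR d z x) ^ 2))
      = ∫⁻ u in Ioi (0:ℝ),
          ENNReal.ofReal ((4 * Real.pi) ^ (-(d:ℝ)/2) * (u ^ (1-(d:ℝ)/2) * Real.exp (-(z*u)))) := by
  haveI : Nonempty (Fin d) := ⟨⟨0, hd⟩⟩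
  set F : EuclideanSpace ℝ (Fin d) → ℝ≥0∞ :=
    fun x => ∫⁻ t in Ioi (0:ℝ), ENNReal.ofReal (g d z x t) with hF
  -- step 1 : a.e. pointwise identity
  have hae : ∀ᵐ x : EuclideanSpace ℝ (Fin d),
      ENNReal.ofReal ((greenR d z x) ^ 2) = F x * F x := by
    have h0 : ∀ᵐ x : EuclideanSpace ℝ (Fin d), x ≠ 0 := by
      rw [ae_iff]
      simp only [ne_eq, not_not]
      have he : {x : EuclideanSpace ℝ (Fin d) | x = 0} = {0} := by ext; simp
      rw [he]
      exact measure_singleton 0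
    filter_upwards [h0] with x hx
    have hint := integrableOn_g d hz hx
    have hnn : 0 ≤ᵐ[volume.restrict (Ioi (0:ℝ))] g d z x :=
      (ae_restrict_iff' measurableSet_Ioi).2 (ae_of_all _ fun t ht => g_nonneg ht)
    have h1 : ENNReal.ofReal (greenR d z x) = F x :=
      ofReal_integral_eq_lintegral_ofReal hint hnn
    have h2 : 0 ≤ greenR d z x := setIntegral_nonneg measurableSet_Ioi fun t ht => g_nonneg ht
    rw [sq, ENNReal.ofReal_mul h2, h1]
  rw [lintegral_congr_ae hae]
  -- measurability
  have hgm : Measurable fun p : EuclideanSpace ℝ (Fin d) × ℝ => ENNReal.ofReal (g d z p.1 p.2) :=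
    ENNReal.measurable_ofReal.comp (measurable_g d z)
  set ν := (volume.restrict (Ioi (0:ℝ))).prod (volume.restrict (Ioi (0:ℝ))) with hν
  -- step 2 : F x * F x as a double integral
  have hprod : ∀ x : EuclideanSpace ℝ (Fin d),
      F x * F x = ∫⁻ p, ENNReal.ofReal (g d z x p.1) * ENNReal.ofReal (g d z x p.2) ∂ν := by
    intro x
    have hxm : Measurable fun t : ℝ => ENNReal.ofReal (g d z x t) :=
      hgm.comp (measurable_const.prodMk measurable_id)
    have hm1 : AEMeasurable
        (fun p : ℝ × ℝ => ENNReal.ofReal (g d z x p.1) * ENNReal.ofReal (g d z x p.2))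
        ((volume.restrict (Ioi (0:ℝ))).prod (volume.restrict (Ioi (0:ℝ)))) :=
      ((hxm.comp measurable_fst).mul (hxm.comp measurable_snd)).aemeasurable
    rw [hν, lintegral_prod _ hm1]
    refine Eq.symm ?_
    calc ∫⁻ t in Ioi (0:ℝ), ∫⁻ s in Ioi (0:ℝ),
          ENNReal.ofReal (g d z x t) * ENNReal.ofReal (g d z x s)
        = ∫⁻ t in Ioi (0:ℝ), ENNReal.ofReal (g d z x t) * F x := by
          refine lintegral_congr fun t => ?_
          rw [lintegral_const_mul' _ _ ENNReal.ofReal_ne_top]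
      _ = F x * F x := lintegral_mul_const _ hxm
  simp_rw [hprod]
  -- step 3 : swap
  have hswap : AEMeasurable
      (Function.uncurry fun (x : EuclideanSpace ℝ (Fin d)) (p : ℝ × ℝ) =>
        ENNReal.ofReal (g d z x p.1) * ENNReal.ofReal (g d z x p.2))
      ((volume : Measure (EuclideanSpace ℝ (Fin d))).prod ν) := by
    refine ((hgm.comp (measurable_fst.prodMk (measurable_fst.comp measurable_snd))).mul
      (hgm.comp (measurable_fst.prodMk (measurable_snd.comp measurable_snd)))).aemeasurable
  rw [lintegral_lintegral_swap hswap]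
  -- step 4 : Gaussian integration
  have hgauss : ∫⁻ p, (∫⁻ x : EuclideanSpace ℝ (Fin d),
        ENNReal.ofReal (g d z x p.1) * ENNReal.ofReal (g d z x p.2)) ∂ν
      = ∫⁻ p, h d z (p.1 + p.2) ∂ν := by
    refine lintegral_congr_ae ?_
    have hmem : ∀ᵐ p ∂ν, p ∈ (Ioi (0:ℝ)) ×ˢ (Ioi (0:ℝ)) := by
      rw [hν, Measure.prod_restrict]
      exact ae_restrict_mem (measurableSet_Ioi.prod measurableSet_Ioi)
    filter_upwards [hmem] with p hp
    exact gauss_step d hz hp.1 hp.2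
  have hm2 : AEMeasurable (fun p : ℝ × ℝ => h d z (p.1 + p.2))
      ((volume.restrict (Ioi (0:ℝ))).prod (volume.restrict (Ioi (0:ℝ)))) :=
    ((measurable_h d z).comp (measurable_fst.add measurable_snd)).aemeasurable
  rw [hgauss, hν, lintegral_prod _ hm2]
  -- step 5 : shift and layer cake
  calc ∫⁻ t in Ioi (0:ℝ), ∫⁻ s in Ioi (0:ℝ), h d z (t + s)
      = ∫⁻ t in Ioi (0:ℝ), ∫⁻ u in Ioi t, h d z u := by
        refine lintegral_congr fun t => shift_step d z t
    _ = ∫⁻ u in Ioi (0:ℝ), ENNReal.ofReal u * h d z u := layer_step d z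
    _ = ∫⁻ u in Ioi (0:ℝ),
          ENNReal.ofReal ((4 * Real.pi) ^ (-(d:ℝ)/2) * (u ^ (1-(d:ℝ)/2) * Real.exp (-(z*u)))) := by
        refine setLIntegral_congr_fun measurableSet_Ioi (fun u hu => ?_)
        have hu0 : (0:ℝ) < u := hu
        unfold h
        rw [← ENNReal.ofReal_mul hu0.le]
        congr 1
        have h41 : (4*Real.pi*u) ^ (-(d:ℝ)/2)
            = (4*Real.pi) ^ (-(d:ℝ)/2) * u ^ (-(d:ℝ)/2) :=
          Real.mul_rpow (by positivity) hu0.le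
        have h42 : u * u ^ (-(d:ℝ)/2) = u ^ (1-(d:ℝ)/2) := by
          nth_rewrite 1 [← Real.rpow_one u]
          rw [← Real.rpow_add hu0]
          congr 1
          ring
        rw [h41, ← h42]
        ring

end GreenAux

theorem greenR_sq_integrable_iff (d : ℕ) (hd : 0 < d) (z : ℝ) (hz : 0 < z) :
    (∫⁻ x : EuclideanSpace ℝ (Fin d), ENNReal.ofReal ((greenR d z x) ^ 2)) < ⊤ ↔
      d = 1 ∨ d = 2 ∨ d = 3 := by
  rw [GreenAux.main_eq d hd hz]
  constructor
  · intro hJ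
    by_contra hcon
    have hd4 : 4 ≤ d := by omega
    rw [GreenAux.J_top d hd4 hz] at hJ
    exact absurd hJ (lt_irrefl _)
  · intro h34
    have : (d:ℝ) < 4 := by
      rcases h34 with rfl | rfl | rfl <;> norm_num
    exact GreenAux.J_fin d this hz
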